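/- If R is a right H-ring, then every finitely generated right R-module is a co-Kasch module. -/

import Mathlib

def IsCoKasch (R : Type*) [Ring R] (M : Type*) [AddCommGroup M] [Module R M] : Prop :=
  ∀ (K : Submodule R M) (S : Submodule R (M ⧸ K)), IsSimpleModule R S →
    ∃ f : M →ₗ[R] S, Function.Surjective f

/-- `E` together with the embedding `i : S →ₗ[R] E` is an injective hull of `S`:
`E` is injective and `i` is an essential monomorphism. -/
def IsInjectiveHull (R : Type*) [Ring R] {S E : Type*} [AddCommGroup S] [Module R S]
    [AddCommGroup E] [Module R E] (i : S →ₗ[R] E) : Prop :=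
  Module.Injective R E ∧ Function.Injective i ∧
    ∀ N : Submodule R E, N ≠ ⊥ → N ⊓ LinearMap.range i ≠ ⊥

/-- `R` is a right `H`-ring: `Hom(E(S₁), E(S₂)) = 0` for all nonisomorphic
simple modules `S₁`, `S₂`. -/
def IsHRing (R : Type u) [Ring R] : Prop :=
  ∀ (S₁ S₂ E₁ E₂ : Type u) [AddCommGroup S₁] [Module R S₁] [AddCommGroup S₂] [Module R S₂]
    [AddCommGroup E₁] [Module R E₁] [AddCommGroup E₂] [Module R E₂],
    IsSimpleModule R S₁ → IsSimpleModule R S₂ → IsEmpty (S₁ ≃ₗ[R] S₂) →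
    ∀ (i₁ : S₁ →ₗ[R] E₁) (i₂ : S₂ →ₗ[R] E₂),
      IsInjectiveHull R i₁ → IsInjectiveHull R i₂ →
      ∀ f : E₁ →ₗ[R] E₂, f = 0

/-!
Let `S ≤ M ⧸ K` be simple. Extending `S ↪ E(S)` along `S ↪ M ⧸ K` gives `h : M → E(S)` whose
image `N` is nonzero and finitely generated, so it has a simple quotient `T = N ⧸ P`. Extending
`N → T ↪ E(T)` along `N ↪ E(S)` gives a nonzero map `E(S) → E(T)`, so `S ≅ T` in an H-ring, and
`M → N → T ≅ S` is onto. Injective hulls exist: a maximal essential extension of `A` inside an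
injective module containing `A` is a direct summand of it.
-/

universe u

theorem exists_maximal_disjoint {α : Type*} [CompleteLattice α] [IsCompactlyGenerated α] (a : α) :
    ∃ c, Maximal (Disjoint · a) c :=
  zorn_le₀ _ fun c hc hchain =>
    ⟨sSup c, hchain.directedOn.disjoint_sSup_left.mpr hc, fun _ => le_sSup⟩

namespace Module.Injective

variable {R : Type u} [Ring R]

theorem of_retraction {N Q : Type u} [AddCommGroup N] [Module R N] [AddCommGroup Q] [Module R Q]
    [Module.Injective R Q] (ι : N →ₗ[R] Q) (π : Q →ₗ[R] N) (hπι : π ∘ₗ ι = LinearMap.id) :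
    Module.Injective R N where
  out X Y _ _ _ _ f hf g := by
    obtain ⟨h, hh⟩ := extension_property R Q X Y f hf (ι ∘ₗ g)
    refine ⟨π ∘ₗ h, LinearMap.congr_fun (?_ : (π ∘ₗ h) ∘ₗ f = g)⟩
    rw [LinearMap.comp_assoc, hh, ← LinearMap.comp_assoc, hπι, LinearMap.id_comp]

theorem exists_extension_of_disjoint {M Q : Type u} [AddCommGroup M] [Module R M]
    [AddCommGroup Q] [Module R Q] [Module.Injective R Q] {N C : Submodule R M}
    (hNC : Disjoint N C) (f : N →ₗ[R] Q) :
    ∃ φ : M →ₗ[R] Q, φ ∘ₗ N.subtype = f ∧ C ≤ LinearMap.ker φ := by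
  have hψ : Function.Injective (C.mkQ ∘ₗ N.subtype) := by
    rwa [← LinearMap.ker_eq_bot, LinearMap.ker_comp, Submodule.ker_mkQ,
      ← Submodule.disjoint_iff_comap_eq_bot]
  obtain ⟨g, hg⟩ := extension_property R Q _ _ _ hψ f
  refine ⟨g ∘ₗ C.mkQ, hg, fun c hc => ?_⟩
  simp [(Submodule.Quotient.mk_eq_zero C).mpr hc]

end Module.Injective

namespace Submodule

variable {R : Type u} [Ring R] {M : Type u} [AddCommGroup M] [Module R M]

def IsEssentialOver (N A : Submodule R M) : Prop :=
  ∀ x ∈ N, x ≠ 0 → ∃ r : R, r • x ∈ A ∧ r • x ≠ 0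

theorem IsEssentialOver.trans {N B A : Submodule R M} (hNB : N.IsEssentialOver B)
    (hBA : B.IsEssentialOver A) : N.IsEssentialOver A := by
  intro x hx hx0
  obtain ⟨r, hrB, hr0⟩ := hNB x hx hx0
  obtain ⟨s, hsA, hs0⟩ := hBA _ hrB hr0
  exact ⟨s * r, by rwa [mul_smul], by rwa [mul_smul]⟩

theorem exists_maximal_isEssentialOver (A : Submodule R M) :
    ∃ N, A ≤ N ∧ Maximal (IsEssentialOver · A) N :=
  zorn_le_nonempty₀ _ (fun c hc hchain y hy =>
    ⟨sSup c, fun x hx => by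
      obtain ⟨N, hN, hxN⟩ := (mem_sSup_of_directed ⟨y, hy⟩ hchain.directedOn).mp hx
      exact hc hN x hxN, fun _ => le_sSup⟩)
    A fun _ _ _ => ⟨1, by rwa [one_smul], by rwa [one_smul]⟩

theorem injective_of_maximal_isEssentialOver {Q : Type u} [AddCommGroup Q] [Module R Q]
    [Module.Injective R Q] {N : Submodule R Q}
    (hN : ∀ N', N ≤ N' → N'.IsEssentialOver N → N' ≤ N) : Module.Injective R N := by
  -- An endomorphism `φ` of `Q` fixing `N` and killing a maximal `C` disjoint from `N` has image
  -- essential over `N`, hence equal to `N`: so `φ` is a retraction onto `N`.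
  obtain ⟨C, hC⟩ := exists_maximal_disjoint N
  obtain ⟨φ, hφN, hφC⟩ :=
    Module.Injective.exists_extension_of_disjoint hC.prop.symm N.subtype
  have hφ_fix : ∀ n ∈ N, φ n = n := fun n hn => congr($hφN ⟨n, hn⟩)
  have hess : (LinearMap.range φ).IsEssentialOver N := by
    rintro _ ⟨x, rfl⟩ hx0
    have hxC : x ∉ C := fun hxC => hx0 (hφC hxC)
    have hlt : C < C ⊔ R ∙ x :=
      left_lt_sup.mpr fun h => hxC (h (mem_span_singleton_self x))
    have hmeet := hC.not_prop_of_gt hlt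
    simp only [disjoint_def, not_forall] at hmeet
    obtain ⟨n, hn, hnN, hn0⟩ := hmeet
    obtain ⟨c, hc, z, hz, rfl⟩ := mem_sup.mp hn
    obtain ⟨r, rfl⟩ := mem_span_singleton.mp hz
    have hφn : r • φ x = c + r • x := by
      rw [← hφ_fix _ hnN, map_add, LinearMap.mem_ker.mp (hφC hc), zero_add, map_smul]
    exact ⟨r, hφn ▸ hnN, hφn ▸ hn0⟩
  have hrange : LinearMap.range φ ≤ N :=
    hN _ (fun n hn => ⟨n, hφ_fix n hn⟩) hess
  exact Module.Injective.of_retraction N.subtype (φ.codRestrict N fun x => hrange ⟨x, rfl⟩)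
    (LinearMap.ext fun n => Subtype.ext (hφ_fix n n.2))

end Submodule

open CategoryTheory in
theorem exists_injective_linearMap_into_injective (R : Type u) [Ring R] (A : Type u)
    [AddCommGroup A] [Module R A] :
    ∃ (Q : Type u) (_ : AddCommGroup Q) (_ : Module R Q) (j : A →ₗ[R] Q),
      Module.Injective R Q ∧ Function.Injective j := by
  let Q : ModuleCat.{u} R := Injective.under (ModuleCat.of R A)
  exact ⟨Q, inferInstance, inferInstance, (Injective.ι (ModuleCat.of R A)).hom,
    Module.injective_module_of_injective_object R Q (inj := inferInstanceAs (Injective Q)),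
    (ModuleCat.mono_iff_injective _).mp inferInstance⟩

theorem exists_isInjectiveHull (R : Type u) [Ring R] (A : Type u) [AddCommGroup A] [Module R A] :
    ∃ (E : Type u) (_ : AddCommGroup E) (_ : Module R E) (i : A →ₗ[R] E), IsInjectiveHull R i := by
  obtain ⟨Q, _, _, j, hQ, hj⟩ := exists_injective_linearMap_into_injective R A
  obtain ⟨N, hjN, hN⟩ := (LinearMap.range j).exists_maximal_isEssentialOver
  have hNinj : Module.Injective R N :=
    Submodule.injective_of_maximal_isEssentialOver fun N' hNN' hN' =>
      hN.le_of_ge (hN'.trans hN.prop) hNN'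
  refine ⟨N, _, _, j.codRestrict N fun a => hjN ⟨a, rfl⟩, hNinj,
    fun a b hab => hj congr(($hab : Q)), fun X hX => ?_⟩
  obtain ⟨x, hxX, hx0⟩ := (Submodule.ne_bot_iff X).mp hX
  obtain ⟨r, ⟨a, ha⟩, hr0⟩ := hN.prop x x.2 (by simpa using hx0)
  exact (Submodule.ne_bot_iff _).mpr
    ⟨r • x, ⟨X.smul_mem r hxX, a, Subtype.ext ha⟩, fun h => hr0 congr(($h : Q))⟩

namespace IsHRing

variable {R : Type u} [Ring R] {S E : Type u} [AddCommGroup S] [Module R S]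
  [AddCommGroup E] [Module R E] [IsSimpleModule R S] {i : S →ₗ[R] E}

theorem nonempty_linearEquiv_quotient_of_isCoatom (hH : IsHRing R) (hi : IsInjectiveHull R i)
    (N : Submodule R E) {P : Submodule R N} (hP : IsCoatom P) : Nonempty (S ≃ₗ[R] N ⧸ P) := by
  have := isSimpleModule_iff_isCoatom.mpr hP
  obtain ⟨F, _, _, iT, hiT⟩ := exists_isInjectiveHull R (N ⧸ P)
  have := hiT.1
  obtain ⟨f, hf⟩ := Module.Injective.extension_property R F N E N.subtype N.injective_subtype
    (iT ∘ₗ P.mkQ)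
  by_contra hS
  have hf0 : f = 0 := hH S (N ⧸ P) E F ‹_› ‹_› (not_nonempty_iff.mp hS) i iT hi hiT f
  obtain ⟨n, -, hn⟩ := SetLike.exists_of_lt hP.lt_top
  have hTn : iT (P.mkQ n) = 0 := by rw [← LinearMap.comp_apply, ← hf, hf0]; rfl
  exact hn ((Submodule.Quotient.mk_eq_zero P).mp (hiT.2.1 (hTn.trans iT.map_zero.symm)))

theorem exists_surjective_of_isInjectiveHull (hH : IsHRing R) (hi : IsInjectiveHull R i)
    (N : Submodule R E) [Module.Finite R N] (hN : N ≠ ⊥) :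
    ∃ f : N →ₗ[R] S, Function.Surjective f := by
  have : Nontrivial N := Submodule.nontrivial_iff_ne_bot.mpr hN
  obtain ⟨P, hP⟩ := IsCoatomic.exists_coatom (α := Submodule R N)
  obtain ⟨e⟩ := hH.nonempty_linearEquiv_quotient_of_isCoatom hi N hP
  exact ⟨e.symm.toLinearMap ∘ₗ P.mkQ, e.symm.surjective.comp P.mkQ_surjective⟩

end IsHRing

/-- If `R` is a right H-ring, then every finitely generated module is
co-Kasch. -/
theorem stmt16 (R : Type u) [Ring R] (hH : IsHRing R) :
    ∀ (M : Type u) [AddCommGroup M] [Module R M], Module.Finite R M → IsCoKasch R M := by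
  intro M _ _ _ K S hS
  obtain ⟨E, _, _, i, hi⟩ := exists_isInjectiveHull R S
  have := hi.1
  obtain ⟨g, hg⟩ :=
    Module.Injective.extension_property R E S (M ⧸ K) S.subtype S.injective_subtype i
  let h := g ∘ₗ K.mkQ
  have hh : LinearMap.range h ≠ ⊥ := by
    have := IsSimpleModule.nontrivial R S
    obtain ⟨s, hs⟩ := exists_ne (0 : S)
    obtain ⟨m, hm⟩ := K.mkQ_surjective s
    have hhm : h m = i s := by rw [← hg]; simp [h, hm]
    rw [Ne, LinearMap.range_eq_bot]
    exact fun h0 => hs (hi.2.1 (by rw [← hhm, h0, LinearMap.zero_apply, map_zero]))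
  obtain ⟨f, hf⟩ := hH.exists_surjective_of_isInjectiveHull hi (LinearMap.range h) hh
  exact ⟨f ∘ₗ h.rangeRestrict, hf.comp h.surjective_rangeRestrict⟩
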